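/- For any weight-2 vector c ∈ F_2^16, the coset H_16 + c contains exactly 8 vectors of weight 2. -/

import Mathlib

open Finset
open scoped Classical

/-- Rows spanning the first-order Reed-Muller code RM(1,4) of length 16. -/
def r1 : Fin 16 → ZMod 2 := fun _ => 1
def r2 : Fin 16 → ZMod 2 := fun i => if i.val < 8 then 1 else 0
def r3 : Fin 16 → ZMod 2 := fun i => if i.val % 8 < 4 then 1 else 0
def r4 : Fin 16 → ZMod 2 := fun i => if i.val % 4 < 2 then 1 else 0
def r5 : Fin 16 → ZMod 2 := fun i => if i.val % 2 = 0 then 1 else 0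

/-- The first-order Reed-Muller code RM(1,4) ⊂ F₂¹⁶. -/
def RM : Submodule (ZMod 2) (Fin 16 → ZMod 2) :=
  Submodule.span (ZMod 2) {r1, r2, r3, r4, r5}

/-- The Hamming code H₁₆, the dual code of RM(1,4). -/
def H16 : Submodule (ZMod 2) (Fin 16 → ZMod 2) where
  carrier := {c | ∀ d ∈ RM, ∑ i, c i * d i = 0}
  zero_mem' := by intro d _; simp
  add_mem' := by
    intro a b ha hb d hd
    have h1 := ha d hd
    have h2 := hb d hd
    have : ∑ i, (a + b) i * d i = (∑ i, a i * d i) + ∑ i, b i * d i := by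
      simp [Pi.add_apply, add_mul, Finset.sum_add_distrib]
    simp only [Set.mem_setOf_eq] at *
    rw [this, h1, h2, add_zero]
  smul_mem' := by
    intro m a ha d hd
    have h1 := ha d hd
    have : ∑ i, (m • a) i * d i = m * ∑ i, a i * d i := by
      simp [Pi.smul_apply, smul_eq_mul, mul_assoc, Finset.mul_sum]
    simp only [Set.mem_setOf_eq] at *
    rw [this, h1, mul_zero]

/-!
Index the coordinates by `F₂⁴` through `bits`, the complemented binary digits read off by
`r2, …, r5`. Then `x ∈ H16` iff `x` has even weight and `∑ x t • bits t = 0`, so the weight-2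
vector supported on `{k, l}` lies in the coset of the one supported on `{i, j}` iff
`bits k + bits l = bits i + bits j =: s`. As `s ≠ 0`, these pairs `{k, l}` are the orbits of
the fixed-point-free involution `a ↦ a + s` of `F₂⁴`, and there are `16 / 2 = 8` of them.
-/

section WeightVectors

variable {ι : Type*} [Fintype ι] [DecidableEq ι]

def charVec (p : Finset ι) : ι → ZMod 2 := fun t => if t ∈ p then 1 else 0

theorem hammingNorm_charVec (p : Finset ι) : hammingNorm (charVec p) = #p := by
  simp [hammingNorm, charVec]

theorem charVec_support (v : ι → ZMod 2) : charVec {t | v t ≠ 0} = v := by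
  ext t
  simp only [charVec, mem_filter, mem_univ, true_and]
  generalize v t = a
  revert a
  decide

theorem card_filter_hammingNorm_eq (k : ℕ) (P : (ι → ZMod 2) → Prop) :
    #{v | hammingNorm v = k ∧ P v} = #{p ∈ powersetCard k univ | P (charVec p)} := by
  refine (card_nbij' charVec (fun v => ({t | v t ≠ 0} : Finset ι)) ?_ ?_ ?_ ?_).symm
  · intro p hp
    simp_all [hammingNorm_charVec]
  · intro v hv
    simp_all [charVec_support, hammingNorm]
  · intro p _
    ext t
    simp [charVec]
  · intro v _
    exact charVec_support v

end WeightVectors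

section ElementaryAbelianTwoGroup

variable {ι G : Type*} [Fintype ι] [DecidableEq ι] [AddCommGroup G]

theorem add_eq_iff_eq_add_of_add_self (hG : ∀ x : G, x + x = 0) {x y s : G} :
    x + y = s ↔ y = x + s := by
  constructor <;> rintro rfl <;> rw [← add_assoc, hG, zero_add]

theorem card_filter_powersetCard_two_sum_eq_mul_two (hG : ∀ x : G, x + x = 0) (φ : ι ≃ G)
    {s : G} (hs : s ≠ 0) :
    #{p ∈ powersetCard 2 univ | ∑ t ∈ p, φ t = s} * 2 = Fintype.card ι := by
  set σ : ι → ι := fun a => φ.symm (φ a + s)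
  have sum_eq_iff {a b : ι} : φ a + φ b = s ↔ b = σ a := by
    rw [add_eq_iff_eq_add_of_add_self hG, ← φ.apply_eq_iff_eq, φ.apply_symm_apply]
  have σ_ne (a : ι) : a ≠ σ a := fun h => hs ((sum_eq_iff.2 h).symm.trans (hG _))
  have σ_σ (a : ι) : σ (σ a) = a := (sum_eq_iff.1 ((add_comm _ _).trans (sum_eq_iff.2 rfl))).symm
  have mem_iff {p : Finset ι} :
      p ∈ powersetCard 2 univ ∧ ∑ t ∈ p, φ t = s ↔ ∃ a, p = {a, σ a} := by
    constructor
    · rintro ⟨hp, hsum⟩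
      obtain ⟨a, b, hab, rfl⟩ := card_eq_two.1 (mem_powersetCard.1 hp).2
      rw [sum_pair hab, sum_eq_iff] at hsum
      exact ⟨a, by rw [hsum]⟩
    · rintro ⟨a, rfl⟩
      exact ⟨mem_powersetCard.2 ⟨subset_univ _, card_pair (σ_ne a)⟩,
        by rw [sum_pair (σ_ne a), sum_eq_iff]⟩
  have fiber_eq {a : ι} : ({b | ({b, σ b} : Finset ι) = {a, σ a}} : Finset ι) = {a, σ a} := by
    ext b
    simp only [mem_filter, mem_univ, true_and]
    constructor
    · intro h
      exact h ▸ mem_insert_self b {σ b}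
    · simp only [mem_insert, mem_singleton]
      rintro (rfl | rfl)
      · rfl
      · rw [σ_σ, pair_comm]
  rw [Fintype.card, card_eq_sum_card_fiberwise (f := fun a => ({a, σ a} : Finset ι)), sum_const_nat]
  · intro p hp
    obtain ⟨a, rfl⟩ := mem_iff.1 (mem_filter.1 hp)
    rw [fiber_eq, card_pair (σ_ne a)]
  · intro a _
    exact mem_filter.2 (mem_iff.2 ⟨a, rfl⟩)

end ElementaryAbelianTwoGroup

def bits (t : Fin 16) : Fin 4 → ZMod 2 := ![r2 t, r3 t, r4 t, r5 t]

theorem bits_bijective : Function.Bijective bits := by decide +kernel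

theorem mem_H16_iff (x : Fin 16 → ZMod 2) :
    x ∈ H16 ↔ ∑ t, x t = 0 ∧ ∑ t, x t • bits t = 0 := by
  have hker : x ∈ H16 ↔ RM ≤ LinearMap.ker (dotProductBilin (ZMod 2) (ZMod 2) x) := Iff.rfl
  rw [hker, RM, Submodule.span_le]
  simp only [Set.insert_subset_iff, Set.singleton_subset_iff, SetLike.mem_coe,
    LinearMap.mem_ker, dotProductBilin_apply_apply, funext_iff, Fin.forall_fin_succ]
  simp [dotProduct, bits, r1, Finset.sum_apply]

theorem charVec_sub_charVec_mem_H16_iff {p q : Finset (Fin 16)} (hpq : #p = #q) :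
    charVec p - charVec q ∈ H16 ↔ ∑ t ∈ p, bits t = ∑ t ∈ q, bits t := by
  simp [mem_H16_iff, charVec, sub_smul, sum_sub_distrib, ite_smul, hpq, sub_eq_zero]

/-- For any weight-2 vector c, the coset H₁₆ + c contains exactly 8
vectors of weight 2. -/
theorem h16_weight_two_coset (c : Fin 16 → ZMod 2) (hc : hammingNorm c = 2) :
    (Finset.univ.filter
        (fun v : Fin 16 → ZMod 2 => hammingNorm v = 2 ∧ v - c ∈ H16)).card = 8 := by
  obtain ⟨q, hq, rfl⟩ : ∃ q : Finset (Fin 16), #q = 2 ∧ charVec q = c :=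
    ⟨_, hc, charVec_support c⟩
  obtain ⟨i, j, hij, rfl⟩ := card_eq_two.1 hq
  have hs : ∑ t ∈ {i, j}, bits t ≠ 0 := by
    rw [sum_pair hij]
    exact fun h => hij (bits_bijective.1 (CharTwo.add_eq_zero.1 h))
  have hcount := card_filter_powersetCard_two_sum_eq_mul_two CharTwo.add_self_eq_zero
    (Equiv.ofBijective bits bits_bijective) hs
  rw [card_filter_hammingNorm_eq, filter_congr fun p hp =>
    charVec_sub_charVec_mem_H16_iff ((mem_powersetCard.1 hp).2.trans hq.symm)]
  simp only [Equiv.ofBijective_apply, Fintype.card_fin] at hcount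
  omega
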